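/- Fix points y_1,…,y_N ∈ ℝ^p and a pairwise distinct point set x'_1,…,x'_n ∈ ℝ^p with x'_i ≠ y_m for all i, m. Let x_i = M_i({x'_j}; {y_m}) = ( Σ_{m=1}^N ‖x'_i − y_m‖₂^{−1} )^{−1} ( (N/n) Σ_{j≠i} (x'_i − x'_j)/‖x'_i − x'_j‖₂ + Σ_{m=1}^N y_m/‖x'_i − y_m‖₂ ) for i = 1,…,n. Then the update has the descent property Ê({x_i}_{i=1}^n; {y_m}) ≤ Ê({x'_j}_{j=1}^n; {y_m}). -/

import Mathlib

open Finset

/-- The empirical energy objective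
`Ê({xᵢ}; {yₘ}) = (2/(nN)) Σᵢ Σₘ ‖yₘ − xᵢ‖ − (1/n²) Σᵢ Σⱼ ‖xᵢ − xⱼ‖`. -/
noncomputable def Ehat {p n N : ℕ} (x : Fin n → EuclideanSpace ℝ (Fin p))
    (y : Fin N → EuclideanSpace ℝ (Fin p)) : ℝ :=
  (2 / ((n : ℝ) * N)) * ∑ i, ∑ m, ‖y m - x i‖
    - (1 / (n : ℝ) ^ 2) * ∑ i, ∑ j, ‖x i - x j‖

/-- The closed-form update map `Mᵢ({x'ⱼ}; {yₘ})`. -/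
noncomputable def Mmap {p n N : ℕ} (x' : Fin n → EuclideanSpace ℝ (Fin p))
    (y : Fin N → EuclideanSpace ℝ (Fin p)) (i : Fin n) :
    EuclideanSpace ℝ (Fin p) :=
  (∑ m, ‖x' i - y m‖⁻¹)⁻¹ •
    (((N : ℝ) / n) • ∑ j ∈ Finset.univ.erase i, ‖x' i - x' j‖⁻¹ • (x' i - x' j)
      + ∑ m, ‖x' i - y m‖⁻¹ • y m)

/-!
The update is a majorize–minimize step. Bounding each `2‖yₘ − xᵢ‖` by the AM–GM tangent
`rᵢₘ + ‖yₘ − xᵢ‖² / rᵢₘ` with `rᵢₘ = ‖yₘ − x'ᵢ‖`, and each `−‖xᵢ − xⱼ‖` by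
`−⟪uᵢⱼ, xᵢ − xⱼ⟫` with `uᵢⱼ` the unit vector along `x'ᵢ − x'ⱼ`, gives a surrogate that
majorizes `Ê` and agrees with it at `x'`. Since `uᵢⱼ` is antisymmetric, the surrogate
separates into one weighted least-squares problem per point, and `Mᵢ` is exactly its minimizer.
-/

open RealInnerProductSpace

lemma two_mul_le_add_sq_div (a : ℝ) {r : ℝ} (hr : 0 < r) : 2 * a ≤ r + a ^ 2 / r := by
  rw [← sub_nonneg, show r + a ^ 2 / r - 2 * a = (r - a) ^ 2 / r by field_simp; ring]
  positivity

section InnerProductSpace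

variable {E : Type*} [NormedAddCommGroup E] [InnerProductSpace ℝ E]

lemma real_inner_inv_norm_smul_le (w v : E) : ⟪‖w‖⁻¹ • w, v⟫ ≤ ‖v‖ := by
  rcases eq_or_ne w 0 with rfl | hw
  · simp
  calc ⟪‖w‖⁻¹ • w, v⟫ ≤ ‖‖w‖⁻¹ • w‖ * ‖v‖ := real_inner_le_norm _ _
    _ = ‖v‖ := by
      rw [norm_smul, norm_inv, norm_norm, inv_mul_cancel₀ (norm_ne_zero_iff.2 hw), one_mul]

lemma real_inner_inv_norm_smul_self (w : E) : ⟪‖w‖⁻¹ • w, w⟫ = ‖w‖ := by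
  rw [real_inner_smul_left, real_inner_self_eq_norm_sq, sq, ← mul_assoc, inv_mul_mul_self]

lemma sum_sum_inner_sub_of_antisymm {ι : Type*} [Fintype ι] (u : ι → ι → E)
    (hu : ∀ i j, u j i = -u i j) (x : ι → E) :
    ∑ i, ∑ j, ⟪u i j, x i - x j⟫ = 2 * ∑ i, ⟪∑ j, u i j, x i⟫ := by
  have swap : ∑ i, ∑ j, ⟪u i j, x j⟫ = -∑ i, ∑ j, ⟪u i j, x i⟫ := by
    rw [sum_comm, ← sum_neg_distrib]
    refine sum_congr rfl fun i _ => ?_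
    rw [← sum_neg_distrib]
    exact sum_congr rfl fun j _ => by rw [hu i j, inner_neg_left]
  simp only [inner_sub_right, sum_sub_distrib, swap, sum_inner]
  ring

lemma sum_mul_norm_sub_sq {κ : Type*} [Fintype κ] (w : κ → ℝ) (y : κ → E) (z : E) :
    ∑ m, w m * ‖z - y m‖ ^ 2
      = (∑ m, w m) * ‖z‖ ^ 2 - 2 * ⟪∑ m, w m • y m, z⟫ + ∑ m, w m * ‖y m‖ ^ 2 := by
  have termwise : ∀ m, w m * ‖z - y m‖ ^ 2
      = w m * ‖z‖ ^ 2 - 2 * ⟪w m • y m, z⟫ + w m * ‖y m‖ ^ 2 := fun m => by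
    rw [norm_sub_sq_real, real_inner_smul_left, real_inner_comm]
    ring
  rw [sum_congr rfl fun m _ => termwise m, sum_add_distrib, sum_sub_distrib, ← sum_mul,
    ← mul_sum, sum_inner]

lemma quadratic_le_of_smul_eq {c : ℝ} (hc : 0 ≤ c) {b M : E} (hM : c • M = b) (z : E) :
    c * ‖M‖ ^ 2 - 2 * ⟪b, M⟫ ≤ c * ‖z‖ ^ 2 - 2 * ⟪b, z⟫ := by
  have hzM : ‖z - M‖ ^ 2 = ‖z‖ ^ 2 - 2 * ⟪M, z⟫ + ‖M‖ ^ 2 := by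
    rw [norm_sub_sq_real, real_inner_comm]
  subst hM
  simp only [real_inner_smul_left, real_inner_self_eq_norm_sq]
  nlinarith [mul_nonneg hc (sq_nonneg ‖z - M‖)]

noncomputable def weightedQuadratic {κ : Type*} [Fintype κ] (w : κ → ℝ) (y : κ → E) (s z : E) :
    ℝ :=
  ∑ m, w m * ‖z - y m‖ ^ 2 - 2 * ⟪s, z⟫

lemma weightedQuadratic_le {κ : Type*} [Fintype κ] {w : κ → ℝ} (hw : 0 < ∑ m, w m)
    (y : κ → E) (s z : E) :
    weightedQuadratic w y s ((∑ m, w m)⁻¹ • (s + ∑ m, w m • y m))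
      ≤ weightedQuadratic w y s z := by
  have expand : ∀ v, weightedQuadratic w y s v
      = (∑ m, w m) * ‖v‖ ^ 2 - 2 * ⟪s + ∑ m, w m • y m, v⟫ + ∑ m, w m * ‖y m‖ ^ 2 := by
    intro v
    rw [weightedQuadratic, sum_mul_norm_sub_sq, inner_add_left]
    ring
  rw [expand, expand]
  linarith [quadratic_le_of_smul_eq hw.le (smul_inv_smul₀ hw.ne' (s + ∑ m, w m • y m)) z]

end InnerProductSpace

section Surrogate

variable {p n N : ℕ} (x' : Fin n → EuclideanSpace ℝ (Fin p))
  (y : Fin N → EuclideanSpace ℝ (Fin p))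

noncomputable def mmSurrogate (x : Fin n → EuclideanSpace ℝ (Fin p)) : ℝ :=
  (1 / ((n : ℝ) * N)) * ∑ i, ∑ m, (‖x' i - y m‖ + ‖x i - y m‖ ^ 2 / ‖x' i - y m‖)
    - (1 / (n : ℝ) ^ 2) * ∑ i, ∑ j, ⟪‖x' i - x' j‖⁻¹ • (x' i - x' j), x i - x j⟫

lemma Ehat_le_mmSurrogate (hxy : ∀ i m, x' i ≠ y m) (x : Fin n → EuclideanSpace ℝ (Fin p)) :
    Ehat x y ≤ mmSurrogate x' y x := by
  have hdouble : (2 / ((n : ℝ) * N)) * ∑ i, ∑ m, ‖y m - x i‖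
      = (1 / ((n : ℝ) * N)) * ∑ i, ∑ m, 2 * ‖x i - y m‖ := by
    simp only [norm_sub_rev (y _), ← mul_sum]
    ring
  rw [Ehat, mmSurrogate, hdouble]
  gcongr with i _ m _ i _ j _
  · exact two_mul_le_add_sq_div _ (norm_pos_iff.2 (sub_ne_zero.2 (hxy i m)))
  · exact real_inner_inv_norm_smul_le _ _

lemma mmSurrogate_self : mmSurrogate x' y x' = Ehat x' y := by
  simp only [mmSurrogate, Ehat, real_inner_inv_norm_smul_self, sq, mul_self_div_self,
    norm_sub_rev (y _), ← two_mul, ← mul_sum]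
  ring

lemma mmSurrogate_eq_sum_weightedQuadratic (hN : N ≠ 0) (x : Fin n → EuclideanSpace ℝ (Fin p)) :
    mmSurrogate x' y x = (1 / ((n : ℝ) * N)) * (∑ i, ∑ m, ‖x' i - y m‖
      + ∑ i, weightedQuadratic (fun m => ‖x' i - y m‖⁻¹) y
          (((N : ℝ) / n) • ∑ j, ‖x' i - x' j‖⁻¹ • (x' i - x' j)) (x i)) := by
  have antisymm : ∀ i j, ‖x' j - x' i‖⁻¹ • (x' j - x' i) = -(‖x' i - x' j‖⁻¹ • (x' i - x' j)) :=
    fun i j => by rw [norm_sub_rev (x' j), ← smul_neg, neg_sub]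
  have hcoef : 1 / ((n : ℝ) * N) * (N / n) = 1 / (n : ℝ) ^ 2 := by
    rw [div_mul_div_comm, one_mul, mul_right_comm, div_mul_cancel_right₀ (Nat.cast_ne_zero.2 hN),
      one_div, sq]
  rw [mmSurrogate, sum_sum_inner_sub_of_antisymm _ antisymm]
  simp only [weightedQuadratic, real_inner_smul_left, div_eq_inv_mul (‖x _ - y _‖ ^ 2),
    sum_add_distrib, sum_sub_distrib, ← mul_sum, ← hcoef]
  ring

lemma Mmap_eq (i : Fin n) :
    Mmap x' y i = (∑ m, ‖x' i - y m‖⁻¹)⁻¹ •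
      (((N : ℝ) / n) • ∑ j, ‖x' i - x' j‖⁻¹ • (x' i - x' j) + ∑ m, ‖x' i - y m‖⁻¹ • y m) := by
  rw [Mmap, sum_erase univ (by rw [sub_self, smul_zero])]

lemma mmSurrogate_Mmap_le (hN : 0 < N) (hxy : ∀ i m, x' i ≠ y m) :
    mmSurrogate x' y (Mmap x' y) ≤ mmSurrogate x' y x' := by
  rw [mmSurrogate_eq_sum_weightedQuadratic x' y hN.ne',
    mmSurrogate_eq_sum_weightedQuadratic x' y hN.ne']
  gcongr with i
  have hweight : 0 < ∑ m, ‖x' i - y m‖⁻¹ :=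
    sum_pos (fun m _ => inv_pos.2 (norm_pos_iff.2 (sub_ne_zero.2 (hxy i m))))
      ⟨⟨0, hN⟩, mem_univ _⟩
  rw [Mmap_eq]
  exact weightedQuadratic_le hweight _ _ _

end Surrogate

theorem closed_form_update_descent_general {p n N : ℕ}
    (hN : 0 < N)
    (x' : Fin n → EuclideanSpace ℝ (Fin p))
    (y : Fin N → EuclideanSpace ℝ (Fin p))
    (hxy : ∀ i m, x' i ≠ y m) :
    Ehat (Mmap x' y) y ≤ Ehat x' y :=
  calc Ehat (Mmap x' y) y ≤ mmSurrogate x' y (Mmap x' y) := Ehat_le_mmSurrogate x' y hxy _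
    _ ≤ mmSurrogate x' y x' := mmSurrogate_Mmap_le x' y hN hxy
    _ = Ehat x' y := mmSurrogate_self x' y

/-- descent property: the closed-form update `xᵢ = Mᵢ({x'ⱼ};{yₘ})`
does not increase the empirical energy objective:
`Ê({xᵢ}; {yₘ}) ≤ Ê({x'ⱼ}; {yₘ})`. -/
theorem closed_form_update_descent {p n N : ℕ}
    (hn : 0 < n) (hN : 0 < N)
    (x' : Fin n → EuclideanSpace ℝ (Fin p))
    (y : Fin N → EuclideanSpace ℝ (Fin p))
    (hdistinct : Function.Injective x')
    (hxy : ∀ i m, x' i ≠ y m) :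
    Ehat (Mmap x' y) y ≤ Ehat x' y :=
  closed_form_update_descent_general hN x' y hxy
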